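/- Suppose additionally that diam(C) ≤ 1. Then the Krasnosel'skii–Mann iterates satisfy ‖x_m − x_n‖ ≤ c_{m,n} for all 0 ≤ m ≤ n. -/

import Mathlib

/-!
Writing `y₀ = x₀` and `y_k = T x_{k-1}`, the iterate `x_m` is the convex combination
`∑_{j ≤ m} π_j^m y_j`, and for `m ≤ n` the weights `∏_{i=m+1}^n (1-α_i)` and `π_k^n`
(`m < k ≤ n`) express `x_n` as a convex combination of `x_m` and the `y_k`. Hence
`x_m - x_n = ∑_{j ≤ m} ∑_{m < k ≤ n} π_j^m π_k^n (y_j - y_k)`. The term with `j = 0` is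
bounded by `diam C ≤ 1`, and for `j ≥ 1` nonexpansiveness gives
`‖y_j - y_k‖ ≤ ‖x_{j-1} - x_{k-1}‖`, which is bounded by strong induction on `m`.
-/

open Finset

noncomputable def kmPi (α : ℕ → ℝ) (k n : ℕ) : ℝ :=
  α k * ∏ i ∈ Icc (k + 1) n, (1 - α i)

section Weights

variable {α : ℕ → ℝ}

lemma kmPi_nonneg (hα : ∀ k, α k ∈ Set.Icc (0 : ℝ) 1) (k n : ℕ) : 0 ≤ kmPi α k n :=
  mul_nonneg (hα k).1 (prod_nonneg fun i _ => sub_nonneg.mpr (hα i).2)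

lemma kmPi_self (k : ℕ) : kmPi α k k = α k := by
  rw [kmPi, Icc_eq_empty (by omega), prod_empty, mul_one]

lemma kmPi_succ {k n : ℕ} (h : k ≤ n) : kmPi α k (n + 1) = kmPi α k n * (1 - α (n + 1)) := by
  rw [kmPi, kmPi, prod_Icc_succ_top (by omega), mul_assoc]

lemma kmPi_zero (hα0 : α 0 = 1) (n : ℕ) : kmPi α 0 n = ∏ i ∈ Icc 1 n, (1 - α i) := by
  rw [kmPi, hα0, one_mul]

lemma prod_add_sum_kmPi {m n : ℕ} (hmn : m ≤ n) :
    ∏ i ∈ Icc (m + 1) n, (1 - α i) + ∑ k ∈ Icc (m + 1) n, kmPi α k n = 1 := by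
  induction n, hmn using Nat.le_induction with
  | base => simp
  | succ n hmn ih =>
    rw [prod_Icc_succ_top (by omega), sum_Icc_succ_top (by omega), kmPi_self,
      sum_congr rfl fun k hk => kmPi_succ (mem_Icc.mp hk).2, ← sum_mul]
    linear_combination (1 - α (n + 1)) * ih

lemma sum_range_kmPi (hα0 : α 0 = 1) (m : ℕ) : ∑ j ∈ range (m + 1), kmPi α j m = 1 := by
  rw [Nat.range_succ_eq_Icc_zero, ← insert_Icc_add_one_left_eq_Icc (Nat.zero_le m),
    sum_insert (by simp), kmPi_zero hα0]
  exact prod_add_sum_kmPi (Nat.zero_le m)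

end Weights

section Representation

variable {X : Type*} [AddCommGroup X] [Module ℝ X] {α : ℕ → ℝ} {x y : ℕ → X}

lemma eq_prod_smul_add_sum_kmPi_smul
    (hx : ∀ k, x (k + 1) = (1 - α (k + 1)) • x k + α (k + 1) • y (k + 1))
    {m n : ℕ} (hmn : m ≤ n) :
    x n = (∏ i ∈ Icc (m + 1) n, (1 - α i)) • x m + ∑ k ∈ Icc (m + 1) n, kmPi α k n • y k := by
  induction n, hmn using Nat.le_induction with
  | base => simp
  | succ n hmn ih =>
    have hshift : ∑ k ∈ Icc (m + 1) n, kmPi α k (n + 1) • y k =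
        (1 - α (n + 1)) • ∑ k ∈ Icc (m + 1) n, kmPi α k n • y k := by
      rw [smul_sum]
      exact sum_congr rfl fun k hk => by rw [kmPi_succ (mem_Icc.mp hk).2, mul_comm, mul_smul]
    rw [hx n, ih, prod_Icc_succ_top (by omega), sum_Icc_succ_top (by omega), kmPi_self, hshift,
      smul_add, smul_smul, mul_comm, add_assoc]

lemma eq_sum_kmPi_smul (hα0 : α 0 = 1) (hy0 : y 0 = x 0)
    (hx : ∀ k, x (k + 1) = (1 - α (k + 1)) • x k + α (k + 1) • y (k + 1)) (m : ℕ) :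
    x m = ∑ j ∈ range (m + 1), kmPi α j m • y j := by
  rw [Nat.range_succ_eq_Icc_zero, ← insert_Icc_add_one_left_eq_Icc (Nat.zero_le m),
    sum_insert (by simp), kmPi_zero hα0, hy0]
  exact eq_prod_smul_add_sum_kmPi_smul hx (Nat.zero_le m)

lemma sub_eq_sum_kmPi_smul_sum_kmPi_smul (hα0 : α 0 = 1) (hy0 : y 0 = x 0)
    (hx : ∀ k, x (k + 1) = (1 - α (k + 1)) • x k + α (k + 1) • y (k + 1))
    {m n : ℕ} (hmn : m ≤ n) :
    x m - x n = ∑ j ∈ range (m + 1), kmPi α j m •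
      ∑ k ∈ Icc (m + 1) n, kmPi α k n • (y j - y k) := by
  -- both sides reduce to `(∑ k, π_k^n) • x m - ∑ k, π_k^n • y k`
  simp only [smul_sub, sum_sub_distrib, ← sum_smul, smul_comm (kmPi α _ m) (∑ k ∈ _, _),
    ← smul_sum, sum_range_kmPi hα0, one_smul, ← eq_sum_kmPi_smul hα0 hy0 hx m]
  rw [eq_prod_smul_add_sum_kmPi_smul hx hmn, ← sub_eq_of_eq_add' (prod_add_sum_kmPi hmn).symm,
    sub_smul, one_smul]
  abel

end Representation

lemma norm_sum_smul_le_sum_mul {ι X : Type*} [SeminormedAddCommGroup X] [NormedSpace ℝ X]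
    {s : Finset ι} {w b : ι → ℝ} {v : ι → X} (hw : ∀ i ∈ s, 0 ≤ w i)
    (hv : ∀ i ∈ s, ‖v i‖ ≤ b i) : ‖∑ i ∈ s, w i • v i‖ ≤ ∑ i ∈ s, w i * b i :=
  (norm_sum_le _ _).trans <| sum_le_sum fun i hi => by
    rw [norm_smul, Real.norm_of_nonneg (hw i hi)]
    exact mul_le_mul_of_nonneg_left (hv i hi) (hw i hi)

def kmAnchor {X : Type*} (T : X → X) (x : ℕ → X) : ℕ → X
  | 0 => x 0
  | k + 1 => T (x k)

lemma Convex.km_iterate_mem {X : Type*} [AddCommGroup X] [Module ℝ X] {C : Set X}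
    (hC : Convex ℝ C) {T : X → X} (hT : Set.MapsTo T C C) {α : ℕ → ℝ}
    (hα : ∀ k, α k ∈ Set.Icc (0 : ℝ) 1) {x : ℕ → X} (hx0 : x 0 ∈ C)
    (hx : ∀ k, x (k + 1) = (1 - α (k + 1)) • x k + α (k + 1) • T (x k)) (k : ℕ) : x k ∈ C := by
  induction k with
  | zero => exact hx0
  | succ k ih =>
    rw [hx k]
    exact hC ih (hT ih) (sub_nonneg.mpr (hα _).2) (hα _).1 (sub_add_cancel _ _)

theorem km_recursive_bound
    {X : Type*} [NormedAddCommGroup X] [NormedSpace ℝ X]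
    (C : Set X) (hCconv : Convex ℝ C)
    (hCbdd : Bornology.IsBounded C) (hCdiam : Metric.diam C ≤ 1)
    (T : X → X) (hTmaps : Set.MapsTo T C C)
    (hT : ∀ x ∈ C, ∀ y ∈ C, ‖T x - T y‖ ≤ ‖x - y‖)
    (α : ℕ → ℝ) (hα0 : α 0 = 1) (hα : ∀ k, α k ∈ Set.Icc (0:ℝ) 1)
    (x : ℕ → X) (hx0 : x 0 ∈ C)
    (hx : ∀ k, x (k + 1) = (1 - α (k + 1)) • x k + α (k + 1) • T (x k))
    (c : ℤ → ℤ → ℝ)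
    (hc1 : ∀ n : ℕ, c (-1) n = 1)
    (hcr : ∀ m n : ℕ, m ≤ n →
      c m n = ∑ j ∈ Finset.range (m + 1), ∑ k ∈ Finset.Icc (m + 1) n,
        (α j * ∏ i ∈ Finset.Icc (j + 1) m, (1 - α i)) *
          (α k * ∏ i ∈ Finset.Icc (k + 1) n, (1 - α i)) *
            c ((j : ℤ) - 1) ((k : ℤ) - 1))
    (m n : ℕ) (hmn : m ≤ n) :
    ‖x m - x n‖ ≤ c m n := by
  have hxC := hCconv.km_iterate_mem hTmaps hα hx0 hx
  induction m using Nat.strong_induction_on generalizing n with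
  | _ m ih =>
  have hanchor : ∀ j ∈ range (m + 1), ∀ k ∈ Icc (m + 1) n,
      ‖kmAnchor T x j - kmAnchor T x k‖ ≤ c ((j : ℤ) - 1) ((k : ℤ) - 1) := by
    rintro j hj (_ | k) hk
    · simp at hk
    rw [Nat.cast_succ, add_sub_cancel_right]
    rcases j with _ | j
    · rw [← dist_eq_norm, Nat.cast_zero, zero_sub, hc1]
      exact (Metric.dist_le_diam_of_mem hCbdd hx0 (hTmaps (hxC k))).trans hCdiam
    · simp only [mem_range, mem_Icc] at hj hk
      rw [Nat.cast_succ, add_sub_cancel_right]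
      exact (hT _ (hxC j) _ (hxC k)).trans (ih j (by omega) k (by omega))
  calc ‖x m - x n‖
      ≤ ∑ j ∈ range (m + 1), kmPi α j m * ∑ k ∈ Icc (m + 1) n, kmPi α k n * c (j - 1) (k - 1) := by
        rw [sub_eq_sum_kmPi_smul_sum_kmPi_smul (x := x) (y := kmAnchor T x) hα0 rfl hx hmn]
        exact norm_sum_smul_le_sum_mul (fun j _ => kmPi_nonneg hα j m) fun j hj =>
          norm_sum_smul_le_sum_mul (fun k _ => kmPi_nonneg hα k n) (hanchor j hj)
    _ = c m n := by
        rw [hcr m n hmn]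
        simp only [kmPi, mul_sum, mul_assoc]
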